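/- For the algebra F_n^2, the space of 2-coboundaries BL^2(F_n^2, V) has basis θ_{1,j}(e_1,e_1)=x_j and θ_{i,j}(e_{i+1},e_1)=x_j for 2 ≤ i ≤ n-2, 1 ≤ j ≤ k; hence dim HL^2(F_n^2, V) = 4k. -/

import Mathlib

/-!
A coboundary `φ ∘ [·,·]` vanishes on every pair of basis vectors whose product is zero.
Conversely, the nonzero products `e_1 e_1 = e_3` and `e_i e_1 = e_{i+1}` (`3 ≤ i ≤ n-1`) are
distinct basis vectors, so `φ` can be prescribed on them to match any bilinear map vanishing
elsewhere.

For a cocycle `θ`, the cocycle identity at `(x, e_1, e_1)` gives `θ(x, e_3) = 0`, and at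
`(x, e_i, e_1)` it propagates this along `e_{i+1} = e_i e_1`, so `θ(x, e_j) = 0` for `j ≥ 3`;
at `(y, e_1, e_2)` with `y e_1 = e_i` it gives `θ(e_i, e_2) = 0` for `i ≥ 3`. Off the support of
the product only the values at `(e_2,e_1), (e_n,e_1), (e_1,e_2), (e_2,e_2)` remain free, and
subtracting the matching combination of these four cocycles leaves a coboundary; it is unique
because coboundaries vanish at these four pairs.
-/

/-- Multiplication of the algebra `F_n^2`: `[e_1,e_1] = e_3`,
`[e_i,e_1] = e_{i+1}` for `3 ≤ i ≤ n-1`, other products zero. -/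
def F2mul (n : ℕ) (x y : Fin n → ℂ) : Fin n → ℂ :=
  fun k =>
    if h : (k : ℕ) = 2 then
      x ⟨0, by have := k.isLt; omega⟩ * y ⟨0, by have := k.isLt; omega⟩
    else if h2 : 3 ≤ (k : ℕ) then
      x ⟨(k : ℕ) - 1, by have := k.isLt; omega⟩ * y ⟨0, by have := k.isLt; omega⟩
    else 0

namespace F2

variable {n : ℕ} {V : Type*} [AddCommGroup V] [Module ℂ V]
  {θ : (Fin n → ℂ) →ₗ[ℂ] (Fin n → ℂ) →ₗ[ℂ] V}

/-- Indices start at `0`, so the paper's `e_1` is `Pi.single 0 1`. -/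
def MulSupport (i j : Fin n) : Prop :=
  (j : ℕ) = 0 ∧ ((i : ℕ) = 0 ∨ (2 ≤ (i : ℕ) ∧ (i : ℕ) ≤ n - 2))

variable (θ) in
def IsCocycle : Prop :=
  ∀ x y z, θ x (F2mul n y z) = θ (F2mul n x y) z - θ (F2mul n x z) y

def lmul (n : ℕ) : (Fin n → ℂ) →ₗ[ℂ] (Fin n → ℂ) →ₗ[ℂ] (Fin n → ℂ) :=
  LinearMap.mk₂ ℂ (F2mul n)
    (by intro x x' y; funext m; simp only [F2mul, Pi.add_apply]; split_ifs <;> ring)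
    (by intro a x y; funext m; simp only [F2mul, Pi.smul_apply, smul_eq_mul]; split_ifs <;> ring)
    (by intro x y y'; funext m; simp only [F2mul, Pi.add_apply]; split_ifs <;> ring)
    (by intro a x y; funext m; simp only [F2mul, Pi.smul_apply, smul_eq_mul]; split_ifs <;> ring)

@[simp] lemma lmul_apply (x y : Fin n → ℂ) : lmul n x y = F2mul n x y := rfl

lemma mul_single_zero_single_zero (h : 2 < n) :
    F2mul n (Pi.single ⟨0, by omega⟩ 1) (Pi.single ⟨0, by omega⟩ 1) = Pi.single ⟨2, h⟩ 1 := by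
  funext m
  simp only [F2mul, Pi.single_apply, Fin.ext_iff]
  split_ifs <;> simp_all; omega

lemma mul_single_single_zero {i : Fin n} (hi : 2 ≤ (i : ℕ)) (h : (i : ℕ) + 1 < n) :
    F2mul n (Pi.single i 1) (Pi.single ⟨0, by omega⟩ 1) = Pi.single ⟨i + 1, h⟩ 1 := by
  funext m
  simp only [F2mul, Pi.single_apply, Fin.ext_iff]
  split_ifs <;> simp_all <;> omega

lemma mul_single_single_of_not_mulSupport {i j : Fin n} (h : ¬MulSupport i j) :
    F2mul n (Pi.single i 1) (Pi.single j 1) = 0 := by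
  funext m
  simp only [MulSupport, not_and_or] at h
  simp only [F2mul, Pi.single_apply, Fin.ext_iff]
  split_ifs <;> simp_all; omega

lemma mul_single_of_ne_zero (x : Fin n → ℂ) {j : Fin n} (hj : (j : ℕ) ≠ 0) :
    F2mul n x (Pi.single j 1) = 0 := by
  funext m
  simp only [F2mul, Pi.single_apply, Fin.ext_iff]
  split_ifs <;> simp_all

/-- In the paper's numbering: `e_3 = e_1 e_1` and `e_{i+1} = e_i e_1` for `i ≥ 3`. -/
def leftFactor (m : Fin n) : Fin n :=
  if (m : ℕ) = 2 then ⟨0, by have := m.isLt; omega⟩ else ⟨m - 1, by have := m.isLt; omega⟩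

lemma mul_single_leftFactor {m : Fin n} (hm : 2 ≤ (m : ℕ)) :
    F2mul n (Pi.single (leftFactor m) 1) (Pi.single ⟨0, by omega⟩ 1) = Pi.single m 1 := by
  funext k
  simp only [leftFactor, F2mul, Pi.single_apply, Fin.ext_iff]
  split_ifs <;> simp_all <;> omega

theorem exists_eq_comp_mul_iff (hn : 2 < n) (θ : (Fin n → ℂ) →ₗ[ℂ] (Fin n → ℂ) →ₗ[ℂ] V) :
    (∃ φ : (Fin n → ℂ) →ₗ[ℂ] V, ∀ x y, θ x y = φ (F2mul n x y)) ↔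
      ∀ i j, ¬MulSupport i j → θ (Pi.single i 1) (Pi.single j 1) = 0 := by
  constructor
  · rintro ⟨φ, hφ⟩ i j hij
    rw [hφ, mul_single_single_of_not_mulSupport hij, map_zero]
  intro h
  let φ := (Pi.basisFun ℂ (Fin n)).constr ℂ fun m =>
    if 2 ≤ (m : ℕ) then θ (Pi.single (leftFactor m) 1) (Pi.single ⟨0, by omega⟩ 1) else 0
  have hφ (m : Fin n) (hm : 2 ≤ (m : ℕ)) :
      φ (Pi.single m 1) = θ (Pi.single (leftFactor m) 1) (Pi.single ⟨0, by omega⟩ 1) := by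
    rw [← Pi.basisFun_apply, Module.Basis.constr_basis, if_pos hm]
  refine ⟨φ, fun x y => LinearMap.congr_fun₂ (LinearMap.ext_basis (Pi.basisFun ℂ (Fin n))
    (Pi.basisFun ℂ (Fin n)) (B' := (lmul n).compr₂ φ) fun i j => ?_) x y⟩
  simp only [Pi.basisFun_apply, LinearMap.compr₂_apply, lmul_apply]
  by_cases hij : MulSupport i j
  · obtain ⟨hj, hi | ⟨hi₂, hi⟩⟩ := hij
    · rw [show i = ⟨0, by omega⟩ from Fin.ext hi, show j = ⟨0, by omega⟩ from Fin.ext hj,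
        mul_single_zero_single_zero hn, hφ _ le_rfl]
      simp [leftFactor]
    · have hi' : leftFactor ⟨i + 1, by omega⟩ = i :=
        Fin.ext (by simp [leftFactor, show (i : ℕ) ≠ 1 by omega])
      rw [show j = ⟨0, by omega⟩ from Fin.ext hj, mul_single_single_zero hi₂ (by omega),
        hφ _ (by simp; omega), hi']
  · rw [mul_single_single_of_not_mulSupport hij, map_zero, h i j hij]

lemma IsCocycle.apply_single_eq_zero (hθ : IsCocycle θ) (x : Fin n → ℂ) {m : Fin n}
    (hm : 2 ≤ (m : ℕ)) :
    θ x (Pi.single m 1) = 0 := by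
  obtain ⟨m, hmn⟩ := m
  dsimp only at hm
  revert hmn x
  induction m, hm using Nat.le_induction with
  | base =>
    intro x hmn
    have h := hθ x (Pi.single ⟨0, by omega⟩ 1) (Pi.single ⟨0, by omega⟩ 1)
    rwa [mul_single_zero_single_zero hmn, sub_self] at h
  | succ m hm ih =>
    intro x hmn
    have h := hθ x (Pi.single ⟨m, by omega⟩ 1) (Pi.single ⟨0, by omega⟩ 1)
    rwa [mul_single_single_zero (i := ⟨m, by omega⟩) hm hmn,
      mul_single_of_ne_zero x (by simp; omega), map_zero, LinearMap.zero_apply, ih _ (by omega),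
      sub_zero] at h

lemma IsCocycle.single_single_eq_zero (hθ : IsCocycle θ) {i j : Fin n} (hi : 2 ≤ (i : ℕ))
    (hj : (j : ℕ) = 1) :
    θ (Pi.single i 1) (Pi.single j 1) = 0 := by
  have h := hθ (Pi.single (leftFactor i) 1) (Pi.single ⟨0, by omega⟩ 1) (Pi.single j 1)
  rwa [mul_single_of_ne_zero (j := j) _ (by omega), mul_single_of_ne_zero (j := j) _ (by omega),
    mul_single_leftFactor hi, map_zero, map_zero, LinearMap.zero_apply, sub_zero, eq_comm] at h

def pairMap (a b : Fin n) (v : V) : (Fin n → ℂ) →ₗ[ℂ] (Fin n → ℂ) →ₗ[ℂ] V :=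
  LinearMap.mk₂ ℂ (fun x y => (x a * y b) • v)
    (fun _ _ _ => by simp only [Pi.add_apply, add_mul, add_smul])
    (fun _ _ _ => by simp only [Pi.smul_apply, smul_eq_mul, mul_assoc, smul_smul])
    (fun _ _ _ => by simp only [Pi.add_apply, mul_add, add_smul])
    (fun _ _ _ => by simp only [Pi.smul_apply, smul_eq_mul, smul_smul, mul_left_comm])

@[simp] lemma pairMap_single_single (a b i j : Fin n) (v : V) :
    pairMap a b v (Pi.single i 1) (Pi.single j 1) = if i = a ∧ j = b then v else 0 := by
  by_cases hi : i = a <;> by_cases hj : j = b <;> simp [pairMap, hi, hj]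

def cocycleComb (h : 2 < n) (c : Fin 4 → V) : (Fin n → ℂ) →ₗ[ℂ] (Fin n → ℂ) →ₗ[ℂ] V :=
  pairMap ⟨1, by omega⟩ ⟨0, by omega⟩ (c 0) + pairMap ⟨n - 1, by omega⟩ ⟨0, by omega⟩ (c 1) +
    pairMap ⟨0, by omega⟩ ⟨1, by omega⟩ (c 2) + pairMap ⟨1, by omega⟩ ⟨1, by omega⟩ (c 3)

def cocycleCoeffs (h : 2 < n) (θ : (Fin n → ℂ) →ₗ[ℂ] (Fin n → ℂ) →ₗ[ℂ] V) : Fin 4 → V :=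
  ![θ (Pi.single ⟨1, by omega⟩ 1) (Pi.single ⟨0, by omega⟩ 1),
    θ (Pi.single ⟨n - 1, by omega⟩ 1) (Pi.single ⟨0, by omega⟩ 1),
    θ (Pi.single ⟨0, by omega⟩ 1) (Pi.single ⟨1, by omega⟩ 1),
    θ (Pi.single ⟨1, by omega⟩ 1) (Pi.single ⟨1, by omega⟩ 1)]

lemma cocycleCoeffs_cocycleComb (hn : 2 < n) (c : Fin 4 → V) :
    cocycleCoeffs hn (cocycleComb hn c) = c := by
  have h₁ : (1 : ℕ) ≠ n - 1 := by omega
  have h₂ : n ≠ 2 := by omega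
  funext t
  fin_cases t <;> simp [cocycleCoeffs, cocycleComb, Fin.ext_iff, h₁, h₂]

lemma cocycleCoeffs_eq_of_eq_off_mulSupport (hn : 2 < n)
    {θ' : (Fin n → ℂ) →ₗ[ℂ] (Fin n → ℂ) →ₗ[ℂ] V}
    (h : ∀ i j, ¬MulSupport i j →
      θ (Pi.single i 1) (Pi.single j 1) = θ' (Pi.single i 1) (Pi.single j 1)) :
    cocycleCoeffs hn θ = cocycleCoeffs hn θ' := by
  funext t
  fin_cases t <;> exact h _ _ (by simp only [MulSupport]; omega)

lemma IsCocycle.eq_cocycleComb_cocycleCoeffs_off_mulSupport (hn : 2 < n) (hθ : IsCocycle θ)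
    {i j : Fin n} (hij : ¬MulSupport i j) :
    θ (Pi.single i 1) (Pi.single j 1) =
      cocycleComb hn (cocycleCoeffs hn θ) (Pi.single i 1) (Pi.single j 1) := by
  have h₁ : (1 : ℕ) ≠ n - 1 := by omega
  simp only [MulSupport] at hij
  obtain hj | hj | hj : (j : ℕ) = 0 ∨ (j : ℕ) = 1 ∨ 2 ≤ (j : ℕ) := by omega
  · rw [show j = ⟨0, by omega⟩ from Fin.ext hj]
    obtain hi | hi : (i : ℕ) = 1 ∨ (i : ℕ) = n - 1 := by omega
    · rw [show i = ⟨1, by omega⟩ from Fin.ext hi]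
      simp [cocycleComb, cocycleCoeffs, Fin.ext_iff, h₁]
    · rw [show i = ⟨n - 1, by omega⟩ from Fin.ext hi]
      simp [cocycleComb, cocycleCoeffs, Fin.ext_iff, h₁.symm]
  · obtain hi | hi | hi : (i : ℕ) = 0 ∨ (i : ℕ) = 1 ∨ 2 ≤ (i : ℕ) := by omega
    · rw [show i = ⟨0, by omega⟩ from Fin.ext hi, show j = ⟨1, by omega⟩ from Fin.ext hj]
      simp [cocycleComb, cocycleCoeffs, Fin.ext_iff]
    · rw [show i = ⟨1, by omega⟩ from Fin.ext hi, show j = ⟨1, by omega⟩ from Fin.ext hj]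
      simp [cocycleComb, cocycleCoeffs, Fin.ext_iff, h₁]
    · rw [hθ.single_single_eq_zero hi hj]
      simp [cocycleComb, Fin.ext_iff, hj, show (i : ℕ) ≠ 0 by omega, show (i : ℕ) ≠ 1 by omega]
  · rw [hθ.apply_single_eq_zero _ hj]
    simp [cocycleComb, Fin.ext_iff, show (j : ℕ) ≠ 0 by omega, show (j : ℕ) ≠ 1 by omega]

lemma eq_cocycleCoeffs_of_sub_cocycleComb_eq_comp (hn : 2 < n) {c : Fin 4 → V}
    {φ : (Fin n → ℂ) →ₗ[ℂ] V}
    (h : ∀ x y, θ x y - cocycleComb hn c x y = φ (F2mul n x y)) :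
    c = cocycleCoeffs hn θ :=
  calc c = cocycleCoeffs hn (cocycleComb hn c) := (cocycleCoeffs_cocycleComb hn c).symm
    _ = cocycleCoeffs hn θ := cocycleCoeffs_eq_of_eq_off_mulSupport hn fun i j hij =>
      (sub_eq_zero.1 ((exists_eq_comp_mul_iff hn (θ - cocycleComb hn c)).1 ⟨φ, h⟩ i j hij)).symm

end F2

/-- `dim HL^2(F_n^2, V) = 4k` is expressed as: every cocycle is congruent modulo coboundaries to
a unique combination of the `4k` cocycles `(e_2,e_1), (e_n,e_1), (e_1,e_2), (e_2,e_2) ↦ x_j`. -/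
theorem F2_coboundaries_and_HL2 (n k : ℕ) (hn : 4 ≤ n) :
    (∀ θ : (Fin n → ℂ) →ₗ[ℂ] (Fin n → ℂ) →ₗ[ℂ] (Fin k → ℂ),
      (∃ φ : (Fin n → ℂ) →ₗ[ℂ] (Fin k → ℂ), ∀ x y, θ x y = φ (F2mul n x y)) ↔
        (∀ i j : Fin n,
          ¬((j : ℕ) = 0 ∧ ((i : ℕ) = 0 ∨ (2 ≤ (i : ℕ) ∧ (i : ℕ) ≤ n - 2))) →
          θ (Pi.single i (1 : ℂ)) (Pi.single j (1 : ℂ)) = 0)) ∧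
    (∀ θ : (Fin n → ℂ) →ₗ[ℂ] (Fin n → ℂ) →ₗ[ℂ] (Fin k → ℂ),
      (∀ x y z : Fin n → ℂ,
          θ x (F2mul n y z) = θ (F2mul n x y) z - θ (F2mul n x z) y) →
      ∃! c : Fin 4 → Fin k → ℂ, ∃ φ : (Fin n → ℂ) →ₗ[ℂ] (Fin k → ℂ),
        ∀ x y : Fin n → ℂ,
          θ x y -
            ((x ⟨1, by omega⟩ * y ⟨0, by omega⟩) • c 0 +
             (x ⟨n - 1, by omega⟩ * y ⟨0, by omega⟩) • c 1 +
             (x ⟨0, by omega⟩ * y ⟨1, by omega⟩) • c 2 +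
             (x ⟨1, by omega⟩ * y ⟨1, by omega⟩) • c 3) = φ (F2mul n x y)) := by
  have hn' : 2 < n := by omega
  refine ⟨F2.exists_eq_comp_mul_iff hn', fun θ hθ => ⟨F2.cocycleCoeffs hn' θ, ?_, ?_⟩⟩
  -- `(θ - cocycleComb hn' c) x y` unfolds definitionally to the expression in the statement.
  · exact (F2.exists_eq_comp_mul_iff hn' (θ - F2.cocycleComb hn' (F2.cocycleCoeffs hn' θ))).2
      fun i j hij => sub_eq_zero.2 <|
        F2.IsCocycle.eq_cocycleComb_cocycleCoeffs_off_mulSupport hn' hθ hij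
  · rintro c ⟨φ, hφ⟩
    exact F2.eq_cocycleCoeffs_of_sub_cocycleComb_eq_comp hn' hφ
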